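/- Let c be a cap-cup cycle with turning number T(c) ∈ {-2, 0, 2, -6, 6, …} (any even value), and let w be an integer such that w + T(c)/2 is odd. Then there exists an assignment of integer writhe components to the elements of c, producing a twisted cap-cup cycle c', such that the total writhe of c' equals w, the underlying cap-cup cycle U(c') equals c, and the turning number of c' equals ±2. -/

import Mathlib

inductive CapCup : Type
  | capL | capR | cupL | cupR
deriving DecidableEq

def CapCup.isCap : CapCup → Bool
  | .capL => true
  | .capR => true
  | .cupL => false
  | .cupR => false

/-- The turning number of a cap or cup. -/
def CapCup.turn : CapCup → ℤ
  | .capR => 1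
  | .capL => -1
  | .cupR => -1
  | .cupL => 1

/-- The turning number of a twisted cap-cup `(c, w)` is `(-1)^{|w|} · t(c)`. -/
def twistedTurn (p : CapCup × ℤ) : ℤ := (-1 : ℤ) ^ p.2.natAbs * p.1.turn

/-! A nonempty cyclically alternating sequence has even length `2m + 2` (the rotation exchanges
caps and cups). Prescribing the twisted turning numbers to be `m + 2` copies of `+1` and `m`
copies of `-1` (writhe `0` or `1` on each element, according as its sign is kept or flipped)
gives total turning number `2`. Changing one writhe by an even number changes only the total
writhe, and the total writhe is automatically right mod 2: elementwise
`t - (-1)^|w| t ≡ 2w (mod 4)`, so `T(c) - 2 ≡ 2 Σ w (mod 4)`, i.e. `Σ w ≡ T(c)/2 + 1 ≡ w (mod 2)`. -/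

lemma even_of_forall_finRotate_ne {n : ℕ} (f : Fin n → Bool) (h : ∀ i, f (finRotate n i) ≠ f i) :
    Even n := by
  let e : {i // f i = true} ≃ {i // ¬f i = true} :=
    (finRotate n).subtypeEquiv fun i => by
      have := h i
      revert this
      cases f i <;> cases f (finRotate n i) <;> decide
  have hcard := Fintype.card_congr e
  have hle := Fintype.card_subtype_le fun i => f i = true
  rw [Fintype.card_subtype_compl, Fintype.card_fin] at hcard
  rw [Fintype.card_fin] at hle
  exact ⟨Fintype.card {i // f i = true}, by omega⟩

lemma List.even_length_of_cyclic_alternating {α : Type*} (l : List α) (p : α → Bool) (hne : l ≠ [])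
    (halt : ∀ i : Fin l.length, p (l.get i) ≠
      p (l.get ⟨((i : ℕ) + 1) % l.length, Nat.mod_lt _ (List.length_pos_iff.mpr hne)⟩)) :
    Even l.length := by
  refine even_of_forall_finRotate_ne (fun i => p (l.get i)) fun i => ?_
  have : finRotate l.length i =
      ⟨((i : ℕ) + 1) % l.length, Nat.mod_lt _ (List.length_pos_iff.mpr hne)⟩ := by
    ext
    simp [Fin.val_add]
  simpa [this] using (halt i).symm

lemma CapCup.turn_eq_one_or_neg_one (a : CapCup) : a.turn = 1 ∨ a.turn = -1 := by
  cases a <;> simp [CapCup.turn]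

lemma twistedTurn_eq_negOnePow_mul (p : CapCup × ℤ) :
    twistedTurn p = p.2.negOnePow * p.1.turn := by
  rw [twistedTurn, ← Int.coe_negOnePow ℤ, Int.cast_id]

lemma twistedTurn_add_two_mul (a : CapCup) (w k : ℤ) :
    twistedTurn (a, w + 2 * k) = twistedTurn (a, w) := by
  simp only [twistedTurn_eq_negOnePow_mul, Int.negOnePow_add, Int.negOnePow_two_mul, mul_one]

lemma exists_twistedTurn_eq (a : CapCup) {s : ℤ} (hs : s = 1 ∨ s = -1) :
    ∃ w, twistedTurn (a, w) = s := by
  cases a <;> rcases hs with rfl | rfl <;> first | exact ⟨0, rfl⟩ | exact ⟨1, rfl⟩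

lemma turn_sub_twistedTurn_modEq (a : CapCup) (w : ℤ) :
    a.turn - twistedTurn (a, w) ≡ 2 * w [ZMOD 4] := by
  obtain ⟨k, rfl | rfl⟩ := Int.even_or_odd' w <;> rcases a.turn_eq_one_or_neg_one with h | h <;>
    simp only [twistedTurn_eq_negOnePow_mul, Int.negOnePow_two_mul, Int.negOnePow_two_mul_add_one,
      h, Int.ModEq, Units.val_one, Units.val_neg] <;> omega

lemma sum_turn_sub_sum_twistedTurn_modEq : ∀ (c : List CapCup) (ws : List ℤ),
    ws.length = c.length →
    (c.map CapCup.turn).sum - ((c.zip ws).map twistedTurn).sum ≡ 2 * ws.sum [ZMOD 4]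
  | [], [], _ => rfl
  | a :: c, w :: ws, hlen => by
    have := (turn_sub_twistedTurn_modEq a w).add
      (sum_turn_sub_sum_twistedTurn_modEq c ws (by simpa using hlen))
    simp only [List.map_cons, List.zip_cons_cons, List.sum_cons]
    convert this using 1 <;> ring

lemma exists_map_twistedTurn_zip_eq : ∀ (c : List CapCup) (s : List ℤ), s.length = c.length →
    (∀ x ∈ s, x = 1 ∨ x = -1) →
    ∃ ws : List ℤ, ws.length = c.length ∧ (c.zip ws).map twistedTurn = s
  | [], [], _, _ => ⟨[], rfl, rfl⟩
  | a :: c, x :: s, hlen, hs => by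
    obtain ⟨w, hw⟩ := exists_twistedTurn_eq a (hs x List.mem_cons_self)
    obtain ⟨ws, hlen', hws⟩ := exists_map_twistedTurn_zip_eq c s (by simpa using hlen)
      fun y hy => hs y (List.mem_cons_of_mem _ hy)
    exact ⟨w :: ws, by simp [hlen'], by simp [hw, hws]⟩

lemma exists_sum_twistedTurn_eq_two (c : List CapCup) (heven : Even c.length) (hne : c ≠ []) :
    ∃ ws : List ℤ, ws.length = c.length ∧ ((c.zip ws).map twistedTurn).sum = 2 := by
  obtain ⟨m, hm⟩ : ∃ m, c.length = m + m + 2 := by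
    obtain ⟨k, hk⟩ := heven
    have := List.length_pos_iff.mpr hne
    exact ⟨k - 1, by omega⟩
  obtain ⟨ws, hlen, hws⟩ := exists_map_twistedTurn_zip_eq c
    (List.replicate (m + 2) 1 ++ List.replicate m (-1)) (by simp only [List.length_append, List.length_replicate]; omega)
    (by simp)
  refine ⟨ws, hlen, ?_⟩
  simp [hws]

lemma exists_writhes_add_two_mul (c : List CapCup) (hne : c ≠ []) (ws₀ : List ℤ)
    (hlen : ws₀.length = c.length) (k : ℤ) :
    ∃ ws : List ℤ, ws.length = c.length ∧ ws.sum = ws₀.sum + 2 * k ∧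
      (c.zip ws).map twistedTurn = (c.zip ws₀).map twistedTurn := by
  obtain ⟨a, c, rfl⟩ := List.exists_cons_of_ne_nil hne
  obtain ⟨w, ws, rfl⟩ := List.exists_cons_of_length_eq_add_one hlen
  refine ⟨(w + 2 * k) :: ws, by simpa using hlen, by rw [List.sum_cons, List.sum_cons]; ring, ?_⟩
  simp [twistedTurn_add_two_mul]

/-- Let `c` be a cap-cup cycle and `w` an integer with `w + T(c)/2` odd.  Then
one can assign integer writhe components to the elements of `c` (producing a
twisted cap-cup cycle whose underlying cap-cup cycle is `c`) with total
writhe `w` and total turning number `±2`. -/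
theorem capCupCycle_writhe_realization (c : List CapCup) (hne : c ≠ [])
    (halt : ∀ i : Fin c.length,
      (c.get i).isCap ≠ (c.get ⟨((i : ℕ) + 1) % c.length,
        Nat.mod_lt _ (List.length_pos_iff.mpr hne)⟩).isCap)
    (w : ℤ) (hodd : Odd (w + (c.map CapCup.turn).sum / 2)) :
    ∃ ws : List ℤ, ws.length = c.length ∧ ws.sum = w ∧
      (((c.zip ws).map twistedTurn).sum = 2 ∨ ((c.zip ws).map twistedTurn).sum = -2) := by
  have heven := List.even_length_of_cyclic_alternating c CapCup.isCap hne halt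
  obtain ⟨ws₀, hlen₀, hturn₀⟩ := exists_sum_twistedTurn_eq_two c heven hne
  have hmod := sum_turn_sub_sum_twistedTurn_modEq c ws₀ hlen₀
  rw [hturn₀, Int.ModEq] at hmod
  obtain ⟨k, hk⟩ : ∃ k, w = ws₀.sum + 2 * k := by
    obtain ⟨j, hj⟩ := hodd
    exact ⟨(w - ws₀.sum) / 2, by omega⟩
  obtain ⟨ws, hlen, hsum, hturn⟩ := exists_writhes_add_two_mul c hne ws₀ hlen₀ k
  exact ⟨ws, hlen, hsum.trans hk.symm, Or.inl (by rw [hturn, hturn₀])⟩
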